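/- In the group ⟨a, b, c | a b a⁻¹ = b⁻², b c b⁻¹ = c⁻²⟩, the subgroup generated by a and c is free of rank 2. -/

import Mathlib

/-- The relators `a b a⁻¹ b²` and `b c b⁻¹ c²` of the group
`⟨a, b, c ∣ a b a⁻¹ = b⁻², b c b⁻¹ = c⁻²⟩`, with `a, b, c = FreeGroup.of 0, 1, 2`. -/
def abcRels : Set (FreeGroup (Fin 3)) :=
  {FreeGroup.of 0 * FreeGroup.of 1 * (FreeGroup.of 0)⁻¹ * (FreeGroup.of 1) ^ 2,
   FreeGroup.of 1 * FreeGroup.of 2 * (FreeGroup.of 1)⁻¹ * (FreeGroup.of 2) ^ 2}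

/-- The group `⟨a, b, c ∣ a b a⁻¹ = b⁻², b c b⁻¹ = c⁻²⟩`. -/
abbrev ABCGroup : Type := PresentedGroup abcRels

namespace ABCFree

def u : ℚˣ := ⟨-2, -(1/2), by norm_num, by norm_num⟩

def addAutMulAut : Multiplicative (AddAut ℚ) →* MulAut (Multiplicative ℚ) where
  toFun e := AddEquiv.toMultiplicative (Multiplicative.toAdd e)
  map_one' := rfl
  map_mul' _ _ := rfl

def act : Multiplicative ℤ →* MulAut (Multiplicative ℚ) :=
  addAutMulAut.comp ((AddAut.mulLeft (R := ℚ)).comp (zpowersHom ℚˣ u))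

abbrev K : Type := Multiplicative ℚ ⋊[act] Multiplicative ℤ

def tK (q : ℚ) : K := SemidirectProduct.inl (Multiplicative.ofAdd q)
def sK (n : ℤ) : K := SemidirectProduct.inr (Multiplicative.ofAdd n)

lemma act_apply (n : ℤ) (q : ℚ) :
    act (Multiplicative.ofAdd n) (Multiplicative.ofAdd q)
      = Multiplicative.ofAdd (((u ^ n : ℚˣ) : ℚ) * q) := rfl

lemma tK_mul (q q' : ℚ) : tK q * tK q' = tK (q + q') := by
  simp [tK, ← map_mul, ← ofAdd_add]

lemma tK_zero : tK 0 = 1 := by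
  simp [tK, ofAdd_zero]

lemma sK_conj (q : ℚ) : sK 1 * tK q * (sK 1)⁻¹ = tK (-2 * q) := by
  rw [tK, sK, ← map_inv, ← SemidirectProduct.inl_aut, act_apply]
  norm_num [u, tK]

lemma tK_zpow (n : ℤ) : tK 1 ^ n = tK (n : ℚ) := by
  simp [tK, ← map_zpow, ← ofAdd_zsmul]

lemma sK_zpow (n : ℤ) : sK 1 ^ n = sK n := by
  simp [sK, ← map_zpow, ← ofAdd_zsmul]

lemma tK_sq : tK 1 ^ 2 = tK 2 := by
  rw [pow_two, tK_mul]; norm_num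

lemma krel : sK 1 * tK 1 * (sK 1)⁻¹ * tK 1 ^ 2 = 1 := by
  rw [sK_conj, tK_sq, tK_mul]; norm_num [tK_zero]

/-- The two embeddings of `ℤ` into `K`, generated by `tK 1` and `sK 1` respectively. -/
def φf : Fin 2 → (Multiplicative ℤ →* K) := fun i =>
  if i = 0 then
    SemidirectProduct.inl.comp (AddMonoidHom.toMultiplicative (Int.castAddHom ℚ))
  else SemidirectProduct.inr

lemma φf_zero (n : ℤ) : φf 0 (Multiplicative.ofAdd n) = tK (n : ℚ) := rfl

lemma φf_one (n : ℤ) : φf 1 (Multiplicative.ofAdd n) = sK n := rfl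

lemma φf_inj : ∀ i, Function.Injective (φf i) := by
  intro i
  fin_cases i
  · intro x y h
    have := congrArg SemidirectProduct.left h
    simp only [φf, if_pos rfl, MonoidHom.coe_comp, Function.comp_apply,
      SemidirectProduct.left_inl] at this
    have h2 : ((Multiplicative.toAdd x : ℤ) : ℚ) = ((Multiplicative.toAdd y : ℤ) : ℚ) := by
      simpa [AddMonoidHom.toMultiplicative] using congrArg Multiplicative.toAdd this
    have := Int.cast_injective h2
    exact Multiplicative.toAdd.injective this
  · exact SemidirectProduct.inr_injective

/-- The amalgamated product of the two Baumslag–Solitar groups. -/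
abbrev P : Type := Monoid.PushoutI φf

open Monoid PushoutI

def A : P := PushoutI.of (φ := φf) 0 (sK 1)
def C : P := PushoutI.of (φ := φf) 1 (tK 1)
def Bp : P := PushoutI.base φf (Multiplicative.ofAdd 1)

lemma Bp_eq0 : Bp = PushoutI.of (φ := φf) 0 (tK 1) := by
  rw [Bp, ← PushoutI.of_apply_eq_base φf 0 (Multiplicative.ofAdd 1), φf_zero]
  norm_num

lemma Bp_eq1 : Bp = PushoutI.of (φ := φf) 1 (sK 1) := by
  rw [Bp, ← PushoutI.of_apply_eq_base φf 1 (Multiplicative.ofAdd 1), φf_one]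

lemma relA : A * Bp * A⁻¹ * Bp ^ 2 = 1 := by
  rw [Bp_eq0, A, ← map_inv, ← map_pow, ← map_mul, ← map_mul, ← map_mul, krel, map_one]

lemma relC : Bp * C * Bp⁻¹ * C ^ 2 = 1 := by
  rw [Bp_eq1, C, ← map_inv, ← map_pow, ← map_mul, ← map_mul, ← map_mul, krel, map_one]

end ABCFree

namespace ABCFree
open Monoid PushoutI

def gK : Fin 2 → K := fun i => if i = 0 then sK 1 else tK 1

def fF (i : Fin 2) : FreeGroup Unit →* K := FreeGroup.lift fun _ => gK i

def Φ : Monoid.CoprodI (fun _ : Fin 2 => FreeGroup Unit) →* P :=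
  Monoid.CoprodI.lift fun i => (PushoutI.of (φ := φf) i).comp (fF i)

lemma fF_eq (i : Fin 2) (g : FreeGroup Unit) :
    fF i g = gK i ^ (FreeGroup.freeGroupUnitEquivInt g) := by
  have h : FreeGroup.freeGroupUnitEquivInt.symm (FreeGroup.freeGroupUnitEquivInt g) = g :=
    Equiv.symm_apply_apply _ _
  have h2 : FreeGroup.freeGroupUnitEquivInt.symm (FreeGroup.freeGroupUnitEquivInt g)
      = FreeGroup.of () ^ (FreeGroup.freeGroupUnitEquivInt g) := rfl
  conv_lhs => rw [← h, h2]
  rw [map_zpow, fF, FreeGroup.lift_apply_of]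

lemma equivInt_ne_zero {g : FreeGroup Unit} (hg : g ≠ 1) :
    FreeGroup.freeGroupUnitEquivInt g ≠ 0 := by
  intro h0
  apply hg
  have h : FreeGroup.freeGroupUnitEquivInt.symm (FreeGroup.freeGroupUnitEquivInt g) = g :=
    Equiv.symm_apply_apply _ _
  have h2 : FreeGroup.freeGroupUnitEquivInt.symm (FreeGroup.freeGroupUnitEquivInt g)
      = FreeGroup.of () ^ (FreeGroup.freeGroupUnitEquivInt g) := rfl
  rw [← h, h2, h0, zpow_zero]

lemma letter_not_in_range (i : Fin 2) (g : FreeGroup Unit) (hg : g ≠ 1) :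
    fF i g ∉ (φf i).range := by
  have hn := equivInt_ne_zero hg
  rw [fF_eq]
  set n := FreeGroup.freeGroupUnitEquivInt g with hn'
  fin_cases i
  · show sK 1 ^ n ∉ _
    rw [sK_zpow]
    rintro ⟨m, hm⟩
    have := congrArg SemidirectProduct.right hm
    simp only [φf, if_pos rfl, MonoidHom.coe_comp, Function.comp_apply,
      SemidirectProduct.right_inl, sK, SemidirectProduct.right_inr] at this
    exact hn (by simpa using congrArg Multiplicative.toAdd this.symm)
  · show tK 1 ^ n ∉ _
    rw [tK_zpow]
    rintro ⟨m, hm⟩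
    have := congrArg SemidirectProduct.left hm
    simp only [φf, SemidirectProduct.left_inr, tK, SemidirectProduct.left_inl] at this
    have : ((n : ℚ)) = 0 := by simpa using congrArg Multiplicative.toAdd this.symm
    exact hn (by exact_mod_cast this)

lemma Φ_injective : Function.Injective Φ := by
  rw [injective_iff_map_eq_one]
  intro x hx
  classical
  set w := Monoid.CoprodI.Word.equiv
    (M := fun _ : Fin 2 => FreeGroup Unit) x with hwdef
  have hprod : w.prod = x := Monoid.CoprodI.Word.equiv.symm_apply_apply x
  let F : (Σ _ : Fin 2, FreeGroup Unit) → (Σ _ : Fin 2, K) := fun l => ⟨l.1, fF l.1 l.2⟩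
  let w' : Monoid.CoprodI.Word (fun _ : Fin 2 => K) :=
    ⟨w.toList.map F, by
      intro l hl
      rw [List.mem_map] at hl
      obtain ⟨a, ha, rfl⟩ := hl
      show fF a.1 a.2 ≠ 1
      intro h1
      exact letter_not_in_range a.1 a.2 (w.ne_one a ha) (h1 ▸ one_mem _),
      (List.isChain_map F).2 w.chain_ne⟩
  have hred : PushoutI.Reduced φf w' := by
    intro g hg
    rw [show w'.toList = w.toList.map F from rfl, List.mem_map] at hg
    obtain ⟨a, ha, rfl⟩ := hg
    exact letter_not_in_range a.1 a.2 (w.ne_one a ha)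
  have hofc : PushoutI.ofCoprodI (φ := φf) w'.prod = Φ x := by
    rw [← hprod]
    show PushoutI.ofCoprodI (Monoid.CoprodI.Word.prod w') = Φ (Monoid.CoprodI.Word.prod w)
    rw [Monoid.CoprodI.Word.prod, Monoid.CoprodI.Word.prod, map_list_prod, map_list_prod,
      show w'.toList = w.toList.map F from rfl]
    simp only [List.map_map]
    congr 1
  have hemp : w' = Monoid.CoprodI.Word.empty :=
    PushoutI.Reduced.eq_empty_of_mem_range φf_inj hred
      (by rw [hofc, hx]; exact one_mem _)
  have hnil : w.toList.map F = [] := congrArg Monoid.CoprodI.Word.toList hemp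
  have hnil2 : w.toList = [] := List.map_eq_nil_iff.mp hnil
  rw [← hprod, Monoid.CoprodI.Word.prod, hnil2]
  simp

end ABCFree


namespace ABCFree
open Monoid PushoutI

def F3 : Fin 3 → P := fun i => if i = 0 then A else if i = 1 then Bp else C

lemma F3_0 : F3 0 = A := rfl
lemma F3_1 : F3 1 = Bp := rfl
lemma F3_2 : F3 2 = C := rfl

lemma hrels : ∀ r ∈ abcRels, FreeGroup.lift F3 r = 1 := by
  intro r hr
  obtain rfl | rfl := hr
  · simp only [map_mul, map_inv, map_pow, FreeGroup.lift_apply_of, F3_0, F3_1]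
    exact relA
  · simp only [map_mul, map_inv, map_pow, FreeGroup.lift_apply_of, F3_1, F3_2]
    exact relC

noncomputable def fhom : ABCGroup →* P := PresentedGroup.toGroup hrels

def g2 : Fin 2 → ABCGroup := fun i =>
  if i = 0 then PresentedGroup.of 0 else PresentedGroup.of 2

lemma g2_0 : g2 0 = PresentedGroup.of 0 := rfl
lemma g2_1 : g2 1 = PresentedGroup.of 2 := rfl

def jhom : FreeGroup (Fin 2) →* ABCGroup := FreeGroup.lift g2

lemma he (i : Fin 2) :
    freeGroupEquivCoprodI (FreeGroup.of i)
      = Monoid.CoprodI.of (M := fun _ : Fin 2 => FreeGroup Unit) (i := i) (FreeGroup.of ()) := by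
  simp [freeGroupEquivCoprodI]

lemma hcomm : fhom.comp jhom
    = Φ.comp (freeGroupEquivCoprodI (ι := Fin 2)).toMonoidHom := by
  apply FreeGroup.ext_hom
  intro i
  fin_cases i
  · show fhom (jhom (FreeGroup.of 0)) = Φ (freeGroupEquivCoprodI (FreeGroup.of 0))
    rw [he, jhom, FreeGroup.lift_apply_of, g2_0, fhom, PresentedGroup.toGroup.of, F3_0,
      Φ, Monoid.CoprodI.lift_of]
    show A = PushoutI.of (φ := φf) 0 (fF 0 (FreeGroup.of ()))
    rw [fF, FreeGroup.lift_apply_of]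
    rfl
  · show fhom (jhom (FreeGroup.of 1)) = Φ (freeGroupEquivCoprodI (FreeGroup.of 1))
    rw [he, jhom, FreeGroup.lift_apply_of, g2_1, fhom, PresentedGroup.toGroup.of, F3_2,
      Φ, Monoid.CoprodI.lift_of]
    show C = PushoutI.of (φ := φf) 1 (fF 1 (FreeGroup.of ()))
    rw [fF, FreeGroup.lift_apply_of]
    rfl

lemma jhom_injective : Function.Injective jhom := by
  have h1 : Function.Injective (⇑fhom ∘ ⇑jhom) := by
    rw [show ⇑fhom ∘ ⇑jhom = ⇑(fhom.comp jhom) from rfl, hcomm]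
    exact Φ_injective.comp (freeGroupEquivCoprodI (ι := Fin 2)).injective
  exact Function.Injective.of_comp h1

lemma jhom_range : jhom.range
    = Subgroup.closure {(PresentedGroup.of 0 : ABCGroup), PresentedGroup.of 2} := by
  rw [jhom, FreeGroup.range_lift_eq_closure]
  congr 1
  ext x
  simp only [Set.mem_range, Fin.exists_fin_two, g2_0, g2_1, Set.mem_insert_iff,
    Set.mem_singleton_iff]
  tauto

end ABCFree

/-- In `⟨a, b, c ∣ a b a⁻¹ = b⁻², b c b⁻¹ = c⁻²⟩`, the subgroup generated by `a` and `c`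
is free of rank 2. -/
theorem abcGroup_closure_a_c_free :
    Nonempty
      (↥(Subgroup.closure {(PresentedGroup.of 0 : ABCGroup), PresentedGroup.of 2}) ≃*
        FreeGroup (Fin 2)) :=
  ⟨((MonoidHom.ofInjective ABCFree.jhom_injective).trans
    (MulEquiv.subgroupCongr ABCFree.jhom_range)).symm⟩
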